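/- arXiv:2506.23047 — 6 statements merged into one kernel-verified Lean document; each statement's English description precedes it below -/
import Mathlib

section
/- Let S be a flat nil-semiring. Then S is subdirectly irreducible if and only if there exists an annihilator ω of S such that ω ∈ S¹aS¹ for every nonzero element a of S. -/
universe u

-- The flat addition determined by a zero element: `a + b = a` if `a = b`, else `0`.
open Classical in
noncomputable def fAdd {S : Type u} (zero : S) (a b : S) : S :=
  if a = b then a else zero

-- A congruence of the flat semiring `(S, fAdd zero, mul)`: an equivalence relation
-- compatible with both the (flat) addition and the multiplication.
def IsCongr {S : Type u} (mul : S → S → S) (zero : S) (r : S → S → Prop) : Prop :=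
  Equivalence r ∧
    (∀ a b c d : S, r a b → r c d → r (fAdd zero a c) (fAdd zero b d)) ∧
    (∀ a b c d : S, r a b → r c d → r (mul a c) (mul b d))

-- Subdirect irreducibility: the congruences different from equality have a least
-- element with respect to inclusion.
def SubdirectlyIrred {S : Type u} (mul : S → S → S) (zero : S) : Prop :=
  ∃ m : S → S → Prop,
    (IsCongr mul zero m ∧ m ≠ (fun a b => a = b)) ∧
    ∀ r : S → S → Prop, IsCongr mul zero r → r ≠ (fun a b => a = b) →
      ∀ a b : S, m a b → r a b

-- `(S, mul, zero)` is a flat semiring: `mul` is associative, `zero` is a (multiplicative)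
-- zero element, and `mul` is 0-cancellative.
def IsFlat {S : Type u} (mul : S → S → S) (zero : S) : Prop :=
  (∀ a b c : S, mul (mul a b) c = mul a (mul b c)) ∧
  (∀ a : S, mul zero a = zero ∧ mul a zero = zero) ∧
  (∀ a b c : S, mul a b = mul a c → mul a b ≠ zero → b = c) ∧
  (∀ a b c : S, mul b a = mul c a → mul b a ≠ zero → b = c)

-- `spow mul a n = a^(n+1)`.
def spow {S : Type u} (mul : S → S → S) (a : S) : ℕ → S
  | 0 => a
  | n + 1 => mul (spow mul a n) a

-- Every element has a power (with exponent `n ≥ 1`) equal to zero.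
def IsNil {S : Type u} (mul : S → S → S) (zero : S) : Prop :=
  ∀ a : S, ∃ n : ℕ, 1 ≤ n ∧ spow mul a (n - 1) = zero

-- `w` is an annihilator: a nonzero element whose product with anything is zero.
def IsAnnihilator {S : Type u} (mul : S → S → S) (zero : S) (w : S) : Prop :=
  w ≠ zero ∧ ∀ s : S, mul w s = zero ∧ mul s w = zero

-- `w ∈ S¹aS¹ = {a} ∪ aS ∪ Sa ∪ SaS`.
def memS1aS1 {S : Type u} (mul : S → S → S) (a w : S) : Prop :=
  w = a ∨ (∃ s, w = mul a s) ∨ (∃ s, w = mul s a) ∨ (∃ s t, w = mul (mul s a) t)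

section Aux

variable {S : Type u} (mul : S → S → S) (zero : S)

lemma spow_comm (a : S) (hassoc : ∀ a b c : S, mul (mul a b) c = mul a (mul b c)) :
    ∀ k, mul a (spow mul a k) = mul (spow mul a k) a := by
  intro k
  induction k with
  | zero => rfl
  | succ k ih =>
    show mul a (mul (spow mul a k) a) = mul (mul (spow mul a k) a) a
    rw [← hassoc, ih]

lemma right_absorb (hflat : IsFlat mul zero) (hnil : IsNil mul zero)
    {a q : S} (h : a = mul a q) : a = zero := by
  have key : ∀ k, a = mul a (spow mul q k) := by
    intro k
    induction k with
    | zero => exact h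
    | succ k ih =>
      show a = mul a (mul (spow mul q k) q)
      rw [← hflat.1, ← ih]
      exact h
  obtain ⟨n, _, hnz⟩ := hnil q
  have := key (n - 1)
  rw [hnz, (hflat.2.1 a).2] at this
  exact this

lemma left_absorb (hflat : IsFlat mul zero) (hnil : IsNil mul zero)
    {a q : S} (h : a = mul q a) : a = zero := by
  have key : ∀ k, a = mul (spow mul q k) a := by
    intro k
    induction k with
    | zero => exact h
    | succ k ih =>
      show a = mul (mul (spow mul q k) q) a
      rw [hflat.1, ← h]
      exact ih
  obtain ⟨n, _, hnz⟩ := hnil q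
  have := key (n - 1)
  rw [hnz, (hflat.2.1 a).1] at this
  exact this

lemma two_absorb (hflat : IsFlat mul zero) (hnil : IsNil mul zero)
    {a p q : S} (h : a = mul (mul p a) q) : a = zero := by
  have key : ∀ k, a = mul (mul (spow mul p k) a) (spow mul q k) := by
    intro k
    induction k with
    | zero => exact h
    | succ k ih =>
      show a = mul (mul (mul (spow mul p k) p) a) (mul (spow mul q k) q)
      rw [hflat.1 (spow mul p k) p a, hflat.1 (spow mul p k) (mul p a) _,
        ← spow_comm mul q hflat.1, ← hflat.1 (mul p a) q (spow mul q k),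
        ← h, ← hflat.1]
      exact ih
  obtain ⟨n, _, hnz⟩ := hnil p
  have := key (n - 1)
  rw [hnz, (hflat.2.1 a).1, (hflat.2.1 (spow mul q (n-1))).1] at this
  exact this

lemma mem_mul_right (hassoc : ∀ a b c : S, mul (mul a b) c = mul a (mul b c))
    {a x : S} (h : memS1aS1 mul a x) (u : S) : memS1aS1 mul a (mul x u) := by
  rcases h with rfl | ⟨s, rfl⟩ | ⟨s, rfl⟩ | ⟨s, t, rfl⟩
  · exact Or.inr (Or.inl ⟨u, rfl⟩)
  · exact Or.inr (Or.inl ⟨mul s u, hassoc a s u⟩)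
  · exact Or.inr (Or.inr (Or.inr ⟨s, u, rfl⟩))
  · exact Or.inr (Or.inr (Or.inr ⟨s, mul t u, hassoc (mul s a) t u⟩))

lemma mem_mul_left (hassoc : ∀ a b c : S, mul (mul a b) c = mul a (mul b c))
    {a x : S} (h : memS1aS1 mul a x) (u : S) : memS1aS1 mul a (mul u x) := by
  rcases h with rfl | ⟨s, rfl⟩ | ⟨s, rfl⟩ | ⟨s, t, rfl⟩
  · exact Or.inr (Or.inr (Or.inl ⟨u, rfl⟩))
  · exact Or.inr (Or.inr (Or.inr ⟨u, s, (hassoc u a s).symm⟩))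
  · exact Or.inr (Or.inr (Or.inl ⟨mul u s, (hassoc u s a).symm⟩))
  · refine Or.inr (Or.inr (Or.inr ⟨mul u s, t, ?_⟩))
    rw [← hassoc u (mul s a) t, ← hassoc u s a]

-- the ideal I(a) = S¹aS¹ ∪ {0}
def inIdeal (a x : S) : Prop := x = zero ∨ memS1aS1 mul a x

-- the Rees congruence of I(a)
def rees (a x y : S) : Prop := x = y ∨ (inIdeal mul zero a x ∧ inIdeal mul zero a y)

lemma inIdeal_mul_right (hassoc : ∀ a b c : S, mul (mul a b) c = mul a (mul b c))
    (hz : ∀ a : S, mul zero a = zero ∧ mul a zero = zero)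
    {a x : S} (h : inIdeal mul zero a x) (u : S) : inIdeal mul zero a (mul x u) := by
  rcases h with rfl | h
  · exact Or.inl (hz u).1
  · exact Or.inr (mem_mul_right mul hassoc h u)

lemma inIdeal_mul_left (hassoc : ∀ a b c : S, mul (mul a b) c = mul a (mul b c))
    (hz : ∀ a : S, mul zero a = zero ∧ mul a zero = zero)
    {a x : S} (h : inIdeal mul zero a x) (u : S) : inIdeal mul zero a (mul u x) := by
  rcases h with rfl | h
  · exact Or.inl (hz u).2
  · exact Or.inr (mem_mul_left mul hassoc h u)

lemma fAdd_inIdeal {a x u : S} (h : inIdeal mul zero a x ∨ inIdeal mul zero a u) :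
    inIdeal mul zero a (fAdd zero x u) := by
  unfold fAdd
  split_ifs with hxu
  · rcases h with h | h
    · exact h
    · exact hxu ▸ h
  · exact Or.inl rfl

lemma rees_isCongr (hflat : IsFlat mul zero) (a : S) :
    IsCongr mul zero (rees mul zero a) := by
  refine ⟨⟨fun x => Or.inl rfl, ?_, ?_⟩, ?_, ?_⟩
  · rintro x y (rfl | ⟨h1, h2⟩)
    · exact Or.inl rfl
    · exact Or.inr ⟨h2, h1⟩
  · rintro x y z (rfl | ⟨h1, h2⟩) (rfl | ⟨h3, h4⟩)
    · exact Or.inl rfl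
    · exact Or.inr ⟨h3, h4⟩
    · exact Or.inr ⟨h1, h2⟩
    · exact Or.inr ⟨h1, h4⟩
  · rintro x y c d (rfl | ⟨h1, h2⟩) (rfl | ⟨h3, h4⟩)
    · exact Or.inl rfl
    · exact Or.inr ⟨fAdd_inIdeal mul zero (Or.inr h3), fAdd_inIdeal mul zero (Or.inr h4)⟩
    · exact Or.inr ⟨fAdd_inIdeal mul zero (Or.inl h1), fAdd_inIdeal mul zero (Or.inl h2)⟩
    · exact Or.inr ⟨fAdd_inIdeal mul zero (Or.inl h1), fAdd_inIdeal mul zero (Or.inl h2)⟩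
  · rintro x y c d (rfl | ⟨h1, h2⟩) (rfl | ⟨h3, h4⟩)
    · exact Or.inl rfl
    · exact Or.inr ⟨inIdeal_mul_left mul zero hflat.1 hflat.2.1 h3 x,
        inIdeal_mul_left mul zero hflat.1 hflat.2.1 h4 x⟩
    · exact Or.inr ⟨inIdeal_mul_right mul zero hflat.1 hflat.2.1 h1 c,
        inIdeal_mul_right mul zero hflat.1 hflat.2.1 h2 c⟩
    · exact Or.inr ⟨inIdeal_mul_right mul zero hflat.1 hflat.2.1 h1 c,
        inIdeal_mul_right mul zero hflat.1 hflat.2.1 h2 d⟩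

lemma exists_ne_rel_zero {r : S → S → Prop} (hr : IsCongr mul zero r)
    (hne : r ≠ fun a b => a = b) : ∃ a, a ≠ zero ∧ r a zero := by
  obtain ⟨hequiv, hadd, _⟩ := hr
  have hex : ∃ u v, r u v ∧ u ≠ v := by
    by_contra h
    push_neg at h
    apply hne
    funext u v
    exact propext ⟨fun hm => h u v hm, fun he => he ▸ hequiv.refl u⟩
  obtain ⟨u, v, huv, hneuv⟩ := hex
  by_cases hu : u = zero
  · have hvu : v ≠ u := fun h => hneuv h.symm
    have hvz : v ≠ zero := fun h => hvu (h.trans hu.symm)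
    have := hadd v v v u (hequiv.refl v) (hequiv.symm huv)
    rw [show fAdd zero v v = v from if_pos rfl,
      show fAdd zero v u = zero from if_neg hvu] at this
    exact ⟨v, hvz, this⟩
  · have := hadd u u u v (hequiv.refl u) huv
    rw [show fAdd zero u u = u from if_pos rfl,
      show fAdd zero u v = zero from if_neg hneuv] at this
    exact ⟨u, hu, this⟩

-- if r is a nontrivial congruence and ω ∈ S¹aS¹ for all nonzero a, then r ω 0.
lemma rel_w_zero (hflat : IsFlat mul zero) {r : S → S → Prop} (hr : IsCongr mul zero r)
    (hne : r ≠ fun a b => a = b) {w : S}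
    (hmem : ∀ a : S, a ≠ zero → memS1aS1 mul a w) : r w zero := by
  obtain ⟨a, haz, hra⟩ := exists_ne_rel_zero mul zero hr hne
  obtain ⟨hequiv, _, hmul⟩ := hr
  rcases hmem a haz with rfl | ⟨s, rfl⟩ | ⟨s, rfl⟩ | ⟨s, t, rfl⟩
  · exact hra
  · have := hmul a zero s s hra (hequiv.refl s)
    rwa [(hflat.2.1 s).1] at this
  · have := hmul s s a zero (hequiv.refl s) hra
    rwa [(hflat.2.1 s).2] at this
  · have h1 := hmul s s a zero (hequiv.refl s) hra
    have := hmul (mul s a) (mul s zero) t t h1 (hequiv.refl t)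
    rwa [(hflat.2.1 s).2, (hflat.2.1 t).1] at this

end Aux

/-- A flat nil-semiring is subdirectly irreducible iff there exists an
annihilator `ω` with `ω ∈ S¹aS¹` for every nonzero `a`. -/
theorem stmt_0 {S : Type u} (mul : S → S → S) (zero : S)
    (hflat : IsFlat mul zero) (hnil : IsNil mul zero) :
    SubdirectlyIrred mul zero ↔
      ∃ w : S, IsAnnihilator mul zero w ∧ ∀ a : S, a ≠ zero → memS1aS1 mul a w := by
  constructor
  · -- forward direction
    rintro ⟨m, ⟨hmcongr, hmne⟩, hleast⟩
    obtain ⟨w, hwz, hmw⟩ := exists_ne_rel_zero mul zero hmcongr hmne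
    -- ω ∈ S¹aS¹ for every nonzero a, via the Rees congruence of I(a)
    have hmem : ∀ a : S, a ≠ zero → memS1aS1 mul a w := by
      intro a haz
      have hrne : rees mul zero a ≠ fun x y => x = y := by
        intro h
        have : rees mul zero a a zero :=
          Or.inr ⟨Or.inr (Or.inl rfl), Or.inl rfl⟩
        rw [h] at this
        exact haz this
      have := hleast (rees mul zero a) (rees_isCongr mul zero hflat a) hrne w zero hmw
      rcases this with h | ⟨h, _⟩
      · exact absurd h hwz
      · rcases h with h | h
        · exact absurd h hwz
        · exact h
    refine ⟨w, ⟨hwz, ?_⟩, hmem⟩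
    intro s
    constructor
    · -- mul w s = zero
      by_contra h
      rcases hmem (mul w s) h with hw | ⟨t, hw⟩ | ⟨t, hw⟩ | ⟨t, u, hw⟩
      · exact hwz (right_absorb mul zero hflat hnil hw)
      · rw [hflat.1] at hw
        exact hwz (right_absorb mul zero hflat hnil hw)
      · rw [← hflat.1] at hw
        exact hwz (two_absorb mul zero hflat hnil hw)
      · rw [← hflat.1 t w s, hflat.1 (mul t w) s u] at hw
        exact hwz (two_absorb mul zero hflat hnil hw)
    · -- mul s w = zero
      by_contra h
      rcases hmem (mul s w) h with hw | ⟨t, hw⟩ | ⟨t, hw⟩ | ⟨t, u, hw⟩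
      · exact hwz (left_absorb mul zero hflat hnil hw)
      · exact hwz (two_absorb mul zero hflat hnil hw)
      · rw [← hflat.1] at hw
        exact hwz (left_absorb mul zero hflat hnil hw)
      · rw [← hflat.1 t s w] at hw
        exact hwz (two_absorb mul zero hflat hnil hw)
  · -- backward direction
    rintro ⟨w, ⟨hwz, hann⟩, hmem⟩
    refine ⟨fun x y => x = y ∨ (x = w ∧ y = zero) ∨ (x = zero ∧ y = w),
      ⟨⟨⟨fun x => Or.inl rfl, ?_, ?_⟩, ?_⟩, ?_⟩, ?_⟩
    · -- symm
      rintro x y (rfl | ⟨rfl, rfl⟩ | ⟨rfl, rfl⟩)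
      · exact Or.inl rfl
      · exact Or.inr (Or.inr ⟨rfl, rfl⟩)
      · exact Or.inr (Or.inl ⟨rfl, rfl⟩)
    · -- trans
      rintro x y z (rfl | ⟨rfl, rfl⟩ | ⟨rfl, rfl⟩) h2
      · exact h2
      · rcases h2 with rfl | ⟨h, _⟩ | ⟨_, rfl⟩
        · exact Or.inr (Or.inl ⟨rfl, rfl⟩)
        · exact absurd h.symm hwz
        · exact Or.inl rfl
      · rcases h2 with rfl | ⟨_, rfl⟩ | ⟨h, _⟩
        · exact Or.inr (Or.inr ⟨rfl, rfl⟩)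
        · exact Or.inl rfl
        · exact absurd h hwz
    · constructor
      · -- fAdd compatibility
        clear hmem hann hnil
        rintro x y c d (rfl | ⟨rfl, rfl⟩ | ⟨rfl, rfl⟩) (rfl | ⟨rfl, rfl⟩ | ⟨rfl, rfl⟩) <;>
          unfold fAdd <;> split_ifs <;> (try subst_eqs) <;> tauto
      · -- mul compatibility
        have hz1 : ∀ s : S, mul zero s = zero := fun s => (hflat.2.1 s).1
        have hz2 : ∀ s : S, mul s zero = zero := fun s => (hflat.2.1 s).2
        have hw1 : ∀ s : S, mul w s = zero := fun s => (hann s).1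
        have hw2 : ∀ s : S, mul s w = zero := fun s => (hann s).2
        rintro x y c d (rfl | ⟨rfl, rfl⟩ | ⟨rfl, rfl⟩) (rfl | ⟨rfl, rfl⟩ | ⟨rfl, rfl⟩) <;>
          simp [hz1, hz2, hw1, hw2]
    · -- not equality
      intro h
      have : (fun a b : S => a = b) w zero := by
        rw [← h]; exact Or.inr (Or.inl ⟨rfl, rfl⟩)
      exact hwz this
    · -- least
      intro r hr hrne x y hxy
      have hrw : r w zero := rel_w_zero mul zero hflat hr hrne hmem
      rcases hxy with rfl | ⟨rfl, rfl⟩ | ⟨rfl, rfl⟩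
      · exact hr.1.refl x
      · exact hrw
      · exact hr.1.symm hrw
end

section
/- A nilpotent flat semiring is subdirectly irreducible if and only if it has exactly one annihilator. -/
universe u

-- `prodLen mul f n` is the product `f 0 * f 1 * ⋯ * f n` (a product of `n + 1` elements).
def prodLen {S : Type u} (mul : S → S → S) (f : ℕ → S) : ℕ → S
  | 0 => f 0
  | n + 1 => mul (prodLen mul f n) (f (n + 1))

-- `S` is nilpotent: there is `k ≥ 1` such that every product of `k` elements equals zero.
def IsNilpotentFlat {S : Type u} (mul : S → S → S) (zero : S) : Prop :=
  ∃ k : ℕ, 1 ≤ k ∧ ∀ f : ℕ → S, prodLen mul f (k - 1) = zero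

section AuxStmt2

variable {S : Type u}

lemma prodLen_congr' (mul : S → S → S) (f g : ℕ → S) :
    ∀ n, (∀ i, i ≤ n → f i = g i) → prodLen mul f n = prodLen mul g n
  | 0, h => h 0 le_rfl
  | n + 1, h => by
      simp only [prodLen]
      rw [prodLen_congr' mul f g n (fun i hi => h i (Nat.le_succ_of_le hi)), h (n + 1) le_rfl]

lemma prodLen_cons' (mul : S → S → S)
    (hassoc : ∀ a b c, mul (mul a b) c = mul a (mul b c)) (s : S) (f : ℕ → S) :
    ∀ n, prodLen mul (fun i => if i = 0 then s else f (i - 1)) (n + 1)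
      = mul s (prodLen mul f n)
  | 0 => by simp [prodLen]
  | n + 1 => by
      show mul (prodLen mul (fun i => if i = 0 then s else f (i - 1)) (n + 1)) _ = _
      rw [prodLen_cons' mul hassoc s f n]
      simp [prodLen, hassoc]

lemma prodLen_zero_ge' (mul : S → S → S) (zero : S)
    (hz : ∀ a, mul zero a = zero) (k : ℕ) (hk : ∀ f : ℕ → S, prodLen mul f (k - 1) = zero) :
    ∀ n, k - 1 ≤ n → ∀ f : ℕ → S, prodLen mul f n = zero := by
  intro n
  induction n with
  | zero =>
    intro h f
    have h0 : k - 1 = 0 := Nat.le_zero.mp h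
    rw [← h0]; exact hk f
  | succ n ih =>
    intro h f
    rcases Nat.lt_or_ge (k - 1) (n + 1) with h' | h'
    · have := ih (Nat.lt_succ_iff.mp h') f
      simp [prodLen, this, hz]
    · have h0 : k - 1 = n + 1 := le_antisymm h h'
      rw [← h0]; exact hk f

lemma memS1aS1_mul_right' (mul : S → S → S)
    (hassoc : ∀ a b c, mul (mul a b) c = mul a (mul b c)) (a s w : S)
    (h : memS1aS1 mul (mul a s) w) : memS1aS1 mul a w := by
  rcases h with h | ⟨t, h⟩ | ⟨t, h⟩ | ⟨t, u, h⟩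
  · exact Or.inr (Or.inl ⟨s, h⟩)
  · exact Or.inr (Or.inl ⟨mul s t, by rw [h, hassoc]⟩)
  · exact Or.inr (Or.inr (Or.inr ⟨t, s, by rw [h, ← hassoc]⟩))
  · exact Or.inr (Or.inr (Or.inr ⟨t, mul s u,
      by rw [h, ← hassoc t a s, hassoc (mul t a) s u]⟩))

lemma memS1aS1_mul_left' (mul : S → S → S)
    (hassoc : ∀ a b c, mul (mul a b) c = mul a (mul b c)) (a s w : S)
    (h : memS1aS1 mul (mul s a) w) : memS1aS1 mul a w := by
  rcases h with h | ⟨t, h⟩ | ⟨t, h⟩ | ⟨t, u, h⟩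
  · exact Or.inr (Or.inr (Or.inl ⟨s, h⟩))
  · exact Or.inr (Or.inr (Or.inr ⟨s, t, h⟩))
  · exact Or.inr (Or.inr (Or.inl ⟨mul t s, by rw [h, ← hassoc]⟩))
  · exact Or.inr (Or.inr (Or.inr ⟨mul t s, u, by rw [h, ← hassoc t s a]⟩))

lemma exists_ann_aux' (mul : S → S → S) (zero : S)
    (hassoc : ∀ a b c, mul (mul a b) c = mul a (mul b c))
    (hz : ∀ a : S, mul zero a = zero ∧ mul a zero = zero)
    (k : ℕ) (hk : ∀ f : ℕ → S, prodLen mul f (k - 1) = zero) :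
    ∀ m n (x : S), k - 1 ≤ n + m → x ≠ zero → (∃ f, prodLen mul f n = x) →
      ∃ w, IsAnnihilator mul zero w ∧ memS1aS1 mul x w := by
  intro m
  induction m with
  | zero =>
    rintro n x hle hx ⟨f, hf⟩
    exact absurd (hf ▸ prodLen_zero_ge' mul zero (fun a => (hz a).1) k hk n
      (by omega) f) (by simpa using hx)
  | succ m ih =>
    rintro n x hle hx ⟨f, hf⟩
    by_cases hann : ∀ s, mul x s = zero ∧ mul s x = zero
    · exact ⟨x, ⟨hx, hann⟩, Or.inl rfl⟩
    · push_neg at hann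
      obtain ⟨s, hs⟩ := hann
      rcases Classical.em (mul x s = zero) with h1 | h1
      · have h2 := hs h1
        have hprod : prodLen mul (fun i => if i = 0 then s else f (i - 1)) (n + 1)
            = mul s x := by rw [prodLen_cons' mul hassoc, hf]
        obtain ⟨w, hw, hmem⟩ := ih (n + 1) (mul s x) (by omega) h2 ⟨_, hprod⟩
        exact ⟨w, hw, memS1aS1_mul_left' mul hassoc x s w hmem⟩
      · have hprod : prodLen mul (fun i => if i ≤ n then f i else s) (n + 1)
            = mul x s := by
          show mul (prodLen mul (fun i => if i ≤ n then f i else s) n) _ = _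
          rw [prodLen_congr' mul (fun i => if i ≤ n then f i else s) f n
            (fun i hi => if_pos hi), hf]
          simp
        obtain ⟨w, hw, hmem⟩ := ih (n + 1) (mul x s) (by omega) h1 ⟨_, hprod⟩
        exact ⟨w, hw, memS1aS1_mul_right' mul hassoc x s w hmem⟩

lemma exists_ann' (mul : S → S → S) (zero : S) (hflat : IsFlat mul zero)
    (hnilp : IsNilpotentFlat mul zero) (a : S) (ha : a ≠ zero) :
    ∃ w, IsAnnihilator mul zero w ∧ memS1aS1 mul a w := by
  obtain ⟨hassoc, hz, _, _⟩ := hflat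
  obtain ⟨k, hk1, hk⟩ := hnilp
  exact exists_ann_aux' mul zero hassoc hz k hk k 0 a (by omega) ha
    ⟨fun _ => a, rfl⟩

lemma fAdd_self {S : Type u} (zero a : S) : fAdd zero a a = a := if_pos rfl

lemma fAdd_zl {S : Type u} (zero c : S) : fAdd zero zero c = zero := by
  unfold fAdd; split_ifs <;> rfl

lemma fAdd_zr {S : Type u} (zero a : S) : fAdd zero a zero = zero := by
  unfold fAdd; split_ifs with h
  · exact h
  · rfl

/-- The relation identifying an annihilator `w` with `zero`. -/
def annRel (zero w : S) (a b : S) : Prop :=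
  a = b ∨ (a = zero ∧ b = w) ∨ (a = w ∧ b = zero)

lemma annRel_isCongr (mul : S → S → S) (zero w : S) (hflat : IsFlat mul zero)
    (hw : IsAnnihilator mul zero w) : IsCongr mul zero (annRel zero w) := by
  obtain ⟨_, hz, _, _⟩ := hflat
  obtain ⟨hw0, hwm⟩ := hw
  have H1 : ∀ s, mul zero s = zero := fun s => (hz s).1
  have H2 : ∀ s, mul s zero = zero := fun s => (hz s).2
  have H3 : ∀ s, mul w s = zero := fun s => (hwm s).1
  have H4 : ∀ s, mul s w = zero := fun s => (hwm s).2
  refine ⟨⟨fun a => Or.inl rfl, ?_, ?_⟩, ?_, ?_⟩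
  · rintro a b (rfl | ⟨rfl, rfl⟩ | ⟨rfl, rfl⟩)
    · exact Or.inl rfl
    · exact Or.inr (Or.inr ⟨rfl, rfl⟩)
    · exact Or.inr (Or.inl ⟨rfl, rfl⟩)
  · rintro a b c (rfl | ⟨rfl, rfl⟩ | ⟨rfl, rfl⟩) hbc
    · exact hbc
    · rcases hbc with h | ⟨h1, h2⟩ | ⟨h1, h2⟩
      · exact Or.inr (Or.inl ⟨rfl, h.symm⟩)
      · exact absurd h1 hw0
      · exact Or.inl h2.symm
    · rcases hbc with h | ⟨h1, h2⟩ | ⟨h1, h2⟩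
      · exact Or.inr (Or.inr ⟨rfl, h.symm⟩)
      · exact Or.inl h2.symm
      · exact absurd h1.symm hw0
  · rintro a b c d hab hcd
    rcases hab with rfl | ⟨ha, hb⟩ | ⟨ha, hb⟩ <;>
      rcases hcd with rfl | ⟨hc, hd⟩ | ⟨hc, hd⟩
    · exact Or.inl rfl
    · rw [hc, hd, fAdd_zr]
      by_cases h : a = w
      · rw [show fAdd zero a w = a from if_pos h, h]
        exact Or.inr (Or.inl ⟨rfl, rfl⟩)
      · rw [show fAdd zero a w = zero from if_neg h]; exact Or.inl rfl
    · rw [hc, hd, fAdd_zr]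
      by_cases h : a = w
      · rw [show fAdd zero a w = a from if_pos h, h]
        exact Or.inr (Or.inr ⟨rfl, rfl⟩)
      · rw [show fAdd zero a w = zero from if_neg h]; exact Or.inl rfl
    · rw [ha, hb, fAdd_zl]
      by_cases h : w = c
      · rw [show fAdd zero w c = w from if_pos h]
        exact Or.inr (Or.inl ⟨rfl, rfl⟩)
      · rw [show fAdd zero w c = zero from if_neg h]; exact Or.inl rfl
    · rw [ha, hb, hc, hd, fAdd_zl, fAdd_self]
      exact Or.inr (Or.inl ⟨rfl, rfl⟩)
    · rw [ha, hb, hc, hd, fAdd_zl, fAdd_zr]; exact Or.inl rfl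
    · rw [ha, hb, fAdd_zl]
      by_cases h : w = c
      · rw [show fAdd zero w c = w from if_pos h]
        exact Or.inr (Or.inr ⟨rfl, rfl⟩)
      · rw [show fAdd zero w c = zero from if_neg h]; exact Or.inl rfl
    · rw [ha, hb, hc, hd, fAdd_zl, fAdd_zr]; exact Or.inl rfl
    · rw [ha, hb, hc, hd, fAdd_zl, fAdd_self]
      exact Or.inr (Or.inr ⟨rfl, rfl⟩)
  · rintro a b c d hab hcd
    rcases hab with rfl | ⟨ha, hb⟩ | ⟨ha, hb⟩ <;>
      rcases hcd with rfl | ⟨hc, hd⟩ | ⟨hc, hd⟩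
    · exact Or.inl rfl
    · exact Or.inl (by rw [hc, hd, H2, H4])
    · exact Or.inl (by rw [hc, hd, H4, H2])
    · exact Or.inl (by rw [ha, hb, H1, H3])
    · exact Or.inl (by rw [ha, hb, hc, hd, H1, H3])
    · exact Or.inl (by rw [ha, hb, hc, hd, H1, H2])
    · exact Or.inl (by rw [ha, hb, H3, H1])
    · exact Or.inl (by rw [ha, hb, hc, hd, H2, H1])
    · exact Or.inl (by rw [ha, hb, hc, hd, H3, H1])

lemma annRel_ne_eq (zero w : S) (hw0 : w ≠ zero) :
    annRel zero w ≠ (fun a b => a = b) := by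
  intro h
  have := congrFun (congrFun h zero) w
  have hzw : annRel zero w zero w := Or.inr (Or.inl ⟨rfl, rfl⟩)
  rw [this] at hzw
  exact hw0 hzw.symm

lemma congr_exists_pair (mul : S → S → S) (zero : S) (r : S → S → Prop)
    (hr : IsCongr mul zero r) (hne : r ≠ (fun a b => a = b)) :
    ∃ a b, a ≠ b ∧ r a b := by
  by_contra h
  push_neg at h
  apply hne
  funext a b
  apply propext
  constructor
  · intro hab
    by_contra hne'
    exact h a b hne' hab
  · rintro rfl
    exact hr.1.refl a

lemma congr_r_zero (mul : S → S → S) (zero : S) (r : S → S → Prop)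
    (hr : IsCongr mul zero r) (a b : S) (hne : a ≠ b) (hab : r a b) :
    ∃ c, c ≠ zero ∧ r c zero := by
  have h1 : r (fAdd zero a a) (fAdd zero b a) := hr.2.1 a b a a hab (hr.1.refl a)
  have h2 : r (fAdd zero b b) (fAdd zero a b) := hr.2.1 b a b b (hr.1.symm hab) (hr.1.refl b)
  rw [show fAdd zero a a = a from if_pos rfl,
      show fAdd zero b a = zero from if_neg (fun h => hne h.symm)] at h1
  rw [show fAdd zero b b = b from if_pos rfl,
      show fAdd zero a b = zero from if_neg hne] at h2
  by_cases ha : a = zero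
  · exact ⟨b, fun hb => hne (ha.trans hb.symm), h2⟩
  · exact ⟨a, ha, h1⟩

lemma congr_r_ann (mul : S → S → S) (zero : S)
    (hz : ∀ a : S, mul zero a = zero ∧ mul a zero = zero)
    (r : S → S → Prop) (hr : IsCongr mul zero r) (c : S) (hc : r c zero)
    (w : S) (hmem : memS1aS1 mul c w) : r w zero := by
  rcases hmem with rfl | ⟨s, rfl⟩ | ⟨s, rfl⟩ | ⟨s, t, rfl⟩
  · exact hc
  · have := hr.2.2 c zero s s hc (hr.1.refl s)
    rwa [(hz s).1] at this
  · have := hr.2.2 s s c zero (hr.1.refl s) hc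
    rwa [(hz s).2] at this
  · have h1 : r (mul s c) zero := by
      have := hr.2.2 s s c zero (hr.1.refl s) hc
      rwa [(hz s).2] at this
    have := hr.2.2 (mul s c) zero t t h1 (hr.1.refl t)
    rwa [(hz t).1] at this

end AuxStmt2

/-- A nilpotent flat semiring is subdirectly irreducible iff it has
exactly one annihilator. -/
theorem stmt_2 {S : Type u} (mul : S → S → S) (zero : S)
    (hflat : IsFlat mul zero) (hnilp : IsNilpotentFlat mul zero) :
    SubdirectlyIrred mul zero ↔ ∃! w : S, IsAnnihilator mul zero w := by
  constructor
  · rintro ⟨m, ⟨hm, hmne⟩, hmin⟩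
    obtain ⟨a, b, hne, hab⟩ := congr_exists_pair mul zero m hm hmne
    have hnz : a ≠ zero ∨ b ≠ zero := by
      by_contra h; push_neg at h; exact hne (h.1.trans h.2.symm)
    have hc : ∃ c : S, c ≠ zero := by
      rcases hnz with h | h
      · exact ⟨a, h⟩
      · exact ⟨b, h⟩
    obtain ⟨c, hcz⟩ := hc
    obtain ⟨w, hw, _⟩ := exists_ann' mul zero hflat hnilp c hcz
    refine ⟨w, hw, ?_⟩
    intro w' hw'
    have key : ∀ v : S, IsAnnihilator mul zero v →
        (a = zero ∧ b = v) ∨ (a = v ∧ b = zero) := by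
      intro v hv
      have hcongr := annRel_isCongr mul zero v hflat hv
      have hneq := annRel_ne_eq zero v hv.1
      have := hmin (annRel zero v) hcongr hneq a b hab
      rcases this with h | h | h
      · exact absurd h hne
      · exact Or.inl h
      · exact Or.inr h
    rcases key w' hw' with ⟨h1, h2⟩ | ⟨h1, h2⟩ <;> rcases key w hw with ⟨h3, h4⟩ | ⟨h3, h4⟩
    · exact h2.symm.trans h4
    · exact absurd (h3.symm.trans h1) hw.1
    · exact absurd (h1.symm.trans h3) hw'.1
    · exact h1.symm.trans h3
  · rintro ⟨w, hw, huniq⟩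
    refine ⟨annRel zero w, ⟨annRel_isCongr mul zero w hflat hw, annRel_ne_eq zero w hw.1⟩, ?_⟩
    intro r hr hrne x y hxy
    obtain ⟨a, b, hne, hab⟩ := congr_exists_pair mul zero r hr hrne
    obtain ⟨c, hcz, hc0⟩ := congr_r_zero mul zero r hr a b hne hab
    obtain ⟨w', hw', hmem⟩ := exists_ann' mul zero hflat hnilp c hcz
    have hweq : w' = w := huniq w' hw'
    have hrw : r w zero := hweq ▸ congr_r_ann mul zero hflat.2.1 r hr c hc0 w' hmem
    rcases hxy with rfl | ⟨rfl, rfl⟩ | ⟨rfl, rfl⟩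
    · exact hr.1.refl x
    · exact hr.1.symm hrw
    · exact hrw
end

section
/- Let S be a subdirectly irreducible flat semiring satisfying a·b = 0 for all a, b ∈ S (that is, S is 2-nilpotent). Then S has exactly two elements, namely 0 and its unique annihilator ω. -/
universe u

lemma pair_congr {S : Type u} (mul : S → S → S) (zero : S)
    (h2nil : ∀ a b : S, mul a b = zero) (a : S) (ha : a ≠ zero) :
    IsCongr mul zero (fun x y => x = y ∨ (x = a ∧ y = zero) ∨ (x = zero ∧ y = a)) := by
  refine ⟨⟨fun x => Or.inl rfl, ?_, ?_⟩, ?_, ?_⟩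
  · rintro x y (rfl | ⟨rfl, rfl⟩ | ⟨rfl, rfl⟩) <;> tauto
  · rintro x y z (rfl | ⟨rfl, rfl⟩ | ⟨rfl, rfl⟩) (h | ⟨h1, h2⟩ | ⟨h1, h2⟩) <;>
      subst_vars <;> tauto
  · rintro x y u v (rfl | ⟨rfl, rfl⟩ | ⟨rfl, rfl⟩) (rfl | ⟨rfl, rfl⟩ | ⟨rfl, rfl⟩) <;>
      simp only [fAdd] <;> split_ifs <;> subst_vars <;> tauto
  · intro x y u v _ _
    simp [h2nil]

/-- A subdirectly irreducible flat semiring satisfying `a·b = 0` for all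
`a, b` (i.e. `2`-nilpotent) has exactly two elements: `0` and its unique annihilator `ω`. -/
theorem stmt_4 {S : Type u} (mul : S → S → S) (zero : S)
    (hflat : IsFlat mul zero) (h2nil : ∀ a b : S, mul a b = zero)
    (hsdi : SubdirectlyIrred mul zero) :
    ∃ w : S, IsAnnihilator mul zero w ∧
      (∀ w' : S, IsAnnihilator mul zero w' → w' = w) ∧
      ∀ x : S, x = zero ∨ x = w := by
  obtain ⟨m, ⟨⟨meq, madd, mmul⟩, mne⟩, mleast⟩ := hsdi
  have hpq : ∃ p q : S, m p q ∧ p ≠ q := by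
    by_contra h
    push_neg at h
    apply mne
    funext p q
    apply propext
    exact ⟨fun hm => h p q hm, fun he => he ▸ meq.refl p⟩
  obtain ⟨p, q, hmpq, hpq⟩ := hpq
  have key : ∀ a : S, a ≠ zero →
      (p = q ∨ (p = a ∧ q = zero) ∨ (p = zero ∧ q = a)) := by
    intro a ha
    refine mleast _ (pair_congr mul zero h2nil a ha) ?_ p q hmpq
    intro hr
    have h2 := congrFun (congrFun hr a) zero
    have h3 : a = zero ∨ (a = a ∧ zero = zero) ∨ (a = zero ∧ zero = a) := by tauto
    rw [h2] at h3
    exact ha h3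
  by_cases hp : p = zero
  · have hq : q ≠ zero := fun h => hpq (hp.trans h.symm)
    refine ⟨q, ⟨hq, fun s => ⟨h2nil q s, h2nil s q⟩⟩, ?_, ?_⟩
    · rintro w' ⟨hw', -⟩
      rcases key w' hw' with h | ⟨h1, h2⟩ | ⟨h1, h2⟩
      · exact absurd h hpq
      · exact absurd h2 hq
      · exact h2.symm
    · intro x
      by_cases hx : x = zero
      · exact Or.inl hx
      rcases key x hx with h | ⟨h1, h2⟩ | ⟨h1, h2⟩
      · exact absurd h hpq
      · exact absurd h2 hq
      · exact Or.inr h2.symm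
  · refine ⟨p, ⟨hp, fun s => ⟨h2nil p s, h2nil s p⟩⟩, ?_, ?_⟩
    · rintro w' ⟨hw', -⟩
      rcases key w' hw' with h | ⟨h1, h2⟩ | ⟨h1, h2⟩
      · exact absurd h hpq
      · exact h1.symm
      · exact absurd h1 hp
    · intro x
      by_cases hx : x = zero
      · exact Or.inl hx
      rcases key x hx with h | ⟨h1, h2⟩ | ⟨h1, h2⟩
      · exact absurd h hpq
      · exact Or.inr h1.symm
      · exact absurd h1 hp
end

section
/- Let S be a flat nil-semiring, let ω be an annihilator of S, and let (S_i)_{i∈I} be a family of subsets of S, each containing 0 and ω and closed under multiplication, such that S = ⋃_{i∈I} S_i, S_i ∩ S_j = {0, ω} for all i ≠ j, and a·b = 0 whenever a ∈ S_i, b ∈ S_j with i ≠ j. If for each i ∈ I the flat semiring S_i (with the operations inherited from S) is subdirectly irreducible, then S is subdirectly irreducible. -/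
universe u

-- Auxiliary: the relation identifying exactly `{z, om}` is a congruence whenever
-- both `z` and `om` annihilate.
lemma flat_congr_zw {T : Type u} (mulT : T → T → T) (z om : T)
    (hz : ∀ a, mulT z a = z ∧ mulT a z = z)
    (hom : ∀ a, mulT om a = z ∧ mulT a om = z) :
    IsCongr mulT z (fun a b => a = b ∨ ((a = z ∨ a = om) ∧ (b = z ∨ b = om))) := by
  have hP : ∀ a c : T, (a = z ∨ a = om) → (fAdd z a c = z ∨ fAdd z a c = om) := by
    intro a c ha
    unfold fAdd
    split_ifs with h
    · exact ha
    · exact Or.inl rfl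
  have hP' : ∀ a c : T, (c = z ∨ c = om) → (fAdd z a c = z ∨ fAdd z a c = om) := by
    intro a c hc
    unfold fAdd
    split_ifs with h
    · subst h; exact hc
    · exact Or.inl rfl
  have mzl : ∀ x y : T, (x = z ∨ x = om) → mulT x y = z := by
    rintro x y (rfl | rfl)
    · exact (hz y).1
    · exact (hom y).1
  have mzr : ∀ x y : T, (y = z ∨ y = om) → mulT x y = z := by
    rintro x y (rfl | rfl)
    · exact (hz x).2
    · exact (hom x).2
  refine ⟨⟨fun a => Or.inl rfl, ?_, ?_⟩, ?_, ?_⟩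
  · rintro a b (rfl | ⟨ha, hb⟩)
    · exact Or.inl rfl
    · exact Or.inr ⟨hb, ha⟩
  · rintro a b c (rfl | ⟨ha, hb⟩) (rfl | ⟨hb', hc⟩)
    · exact Or.inl rfl
    · exact Or.inr ⟨hb', hc⟩
    · exact Or.inr ⟨ha, hb⟩
    · exact Or.inr ⟨ha, hc⟩
  · rintro a b c d (rfl | ⟨ha, hb⟩) (rfl | ⟨hc, hd⟩)
    · exact Or.inl rfl
    · exact Or.inr ⟨hP' a c hc, hP' a d hd⟩
    · exact Or.inr ⟨hP a c ha, hP b c hb⟩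
    · exact Or.inr ⟨hP a c ha, hP b d hb⟩
  · rintro a b c d (rfl | ⟨ha, hb⟩) (rfl | ⟨hc, hd⟩)
    · exact Or.inl rfl
    · exact Or.inr ⟨Or.inl (mzr a c hc), Or.inl (mzr a d hd)⟩
    · exact Or.inr ⟨Or.inl (mzl a c ha), Or.inl (mzl b c hb)⟩
    · exact Or.inr ⟨Or.inl (mzl a c ha), Or.inl (mzl b d hb)⟩

-- Auxiliary: a relation differing from equality relates two distinct elements,
-- provided it is reflexive.
lemma ne_eq_rel {T : Type u} {r : T → T → Prop} (hrefl : ∀ a, r a a)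
    (hne : r ≠ (fun a b => a = b)) : ∃ x y, r x y ∧ x ≠ y := by
  by_contra h
  push_neg at h
  apply hne
  funext a b
  exact propext ⟨fun h' => h a b h', fun h' => h' ▸ hrefl a⟩

/-- Let `S` be a flat nil-semiring, `ω` an annihilator of `S`, and
`(A i)_{i ∈ I}` a family of subsets of `S`, each containing `0` and `ω` and closed under
multiplication, covering `S`, pairwise intersecting exactly in `{0, ω}`, with cross
products zero. If each `A i` (with the inherited operations) is subdirectly irreducible,
then `S` is subdirectly irreducible. -/
theorem stmt_5 {S : Type u} (mul : S → S → S) (zero : S)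
    (hflat : IsFlat mul zero) (hnil : IsNil mul zero)
    (w : S) (hw : IsAnnihilator mul zero w)
    {I : Type u} (A : I → Set S)
    (h0 : ∀ i : I, zero ∈ A i) (hwmem : ∀ i : I, w ∈ A i)
    (hclosed : ∀ i : I, ∀ a ∈ A i, ∀ b ∈ A i, mul a b ∈ A i)
    (hcover : ∀ x : S, ∃ i : I, x ∈ A i)
    (hinter : ∀ i j : I, i ≠ j → A i ∩ A j = {zero, w})
    (hcross : ∀ i j : I, i ≠ j → ∀ a ∈ A i, ∀ b ∈ A j, mul a b = zero)
    (hsdi : ∀ i : I,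
      SubdirectlyIrred
        (fun a b : A i => (⟨mul a.1 b.1, hclosed i a.1 a.2 b.1 b.2⟩ : A i))
        (⟨zero, h0 i⟩ : A i)) :
    SubdirectlyIrred mul zero := by
  obtain ⟨hassoc, hzero, hcl, hcr⟩ := hflat
  obtain ⟨hwne, hwab⟩ := hw
  refine ⟨fun a b => a = b ∨ ((a = zero ∨ a = w) ∧ (b = zero ∨ b = w)), ⟨?_, ?_⟩, ?_⟩
  · exact flat_congr_zw mul zero w hzero hwab
  · intro heq
    have : zero = w := by
      have h1 : (fun a b : S => a = b ∨ ((a = zero ∨ a = w) ∧ (b = zero ∨ b = w))) zero w :=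
        Or.inr ⟨Or.inl rfl, Or.inr rfl⟩
      rw [heq] at h1
      exact h1
    exact hwne this.symm
  · intro r hr hrne a b hab
    -- Step 1: get a nonzero element related to zero.
    obtain ⟨x, y, hrxy, hxy⟩ := ne_eq_rel hr.1.refl hrne
    have key : ∃ a0, a0 ≠ zero ∧ r a0 zero := by
      by_cases hxz : x = zero
      · have hyx : y ≠ x := fun hh => hxy hh.symm
        have h1 := hr.2.1 y y y x (hr.1.refl y) (hr.1.symm hrxy)
        unfold fAdd at h1
        rw [if_pos rfl, if_neg hyx] at h1
        exact ⟨y, fun hh => hyx (hh.trans hxz.symm), hxz ▸ h1⟩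
      · have h1 := hr.2.1 x x x y (hr.1.refl x) hrxy
        unfold fAdd at h1
        rw [if_pos rfl, if_neg hxy] at h1
        exact ⟨x, hxz, h1⟩
    obtain ⟨a0, ha0ne, ha0r⟩ := key
    obtain ⟨i, ha0i⟩ := hcover a0
    -- Step 2: restrict r to A i, a nontrivial congruence there.
    set mul' : A i → A i → A i :=
      fun a b => (⟨mul a.1 b.1, hclosed i a.1 a.2 b.1 b.2⟩ : A i) with hmul'
    set z' : A i := ⟨zero, h0 i⟩ with hz'
    set om' : A i := ⟨w, hwmem i⟩ with hom'
    have hfa : ∀ u v : A i, (fAdd z' u v).1 = fAdd zero u.1 v.1 := by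
      intro u v
      unfold fAdd
      by_cases h : u = v
      · rw [if_pos h, if_pos (congrArg Subtype.val h)]
      · rw [if_neg h, if_neg (fun hh => h (Subtype.ext hh))]
    set r' : A i → A i → Prop := fun u v => r u.1 v.1 with hr'
    have hr'c : IsCongr mul' z' r' := by
      refine ⟨⟨fun u => hr.1.refl u.1, fun h => hr.1.symm h, fun h1 h2 => hr.1.trans h1 h2⟩,
        ?_, ?_⟩
      · intro u v s t h1 h2
        have := hr.2.1 u.1 v.1 s.1 t.1 h1 h2
        show r (fAdd z' u s).1 (fAdd z' v t).1
        rw [hfa, hfa]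
        exact this
      · intro u v s t h1 h2
        exact hr.2.2 u.1 v.1 s.1 t.1 h1 h2
    have hr'ne : r' ≠ (fun u v : A i => u = v) := by
      intro heq
      have h1 : r' ⟨a0, ha0i⟩ z' := ha0r
      rw [heq] at h1
      exact ha0ne (congrArg Subtype.val h1)
    -- Step 3: use subdirect irreducibility of A i.
    obtain ⟨mi, ⟨⟨hmic, hmine⟩, hmin⟩⟩ := hsdi i
    have hmir : ∀ u v : A i, mi u v → r u.1 v.1 := hmin r' hr'c hr'ne
    -- Step 4: the {0, w} relation on A i is a nontrivial congruence, hence contains mi.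
    have hnc : IsCongr mul' z'
        (fun u v : A i => u = v ∨ ((u = z' ∨ u = om') ∧ (v = z' ∨ v = om'))) := by
      refine flat_congr_zw mul' z' om' ?_ ?_
      · intro a
        exact ⟨Subtype.ext (hzero a.1).1, Subtype.ext (hzero a.1).2⟩
      · intro a
        exact ⟨Subtype.ext (hwab a.1).1, Subtype.ext (hwab a.1).2⟩
    have hnne : (fun u v : A i => u = v ∨ ((u = z' ∨ u = om') ∧ (v = z' ∨ v = om'))) ≠
        (fun u v : A i => u = v) := by
      intro heq
      have h1 : (fun u v : A i => u = v ∨ ((u = z' ∨ u = om') ∧ (v = z' ∨ v = om'))) z' om' :=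
        Or.inr ⟨Or.inl rfl, Or.inr rfl⟩
      rw [heq] at h1
      exact hwne (congrArg Subtype.val h1).symm
    have hmin' := hmin _ hnc hnne
    obtain ⟨u, v, hmiuv, huv⟩ := ne_eq_rel hmic.1.refl hmine
    have hruv : r u.1 v.1 := hmir u v hmiuv
    have hn : (u = z' ∨ u = om') ∧ (v = z' ∨ v = om') := by
      rcases hmin' u v hmiuv with h | h
      · exact absurd h huv
      · exact h
    -- Step 5: conclude r zero w.
    have hr0w : r zero w := by
      rcases hn.1 with rfl | rfl <;> rcases hn.2 with rfl | rfl
      · exact absurd rfl huv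
      · exact hruv
      · exact hr.1.symm hruv
      · exact absurd rfl huv
    -- Finish.
    rcases hab with rfl | ⟨ha, hb⟩
    · exact hr.1.refl a
    · rcases ha with ha | ha <;> rcases hb with hb | hb <;> rw [ha, hb]
      · exact hr.1.refl _
      · exact hr0w
      · exact hr.1.symm hr0w
      · exact hr.1.refl _
end

section
/- Let S be a flat semiring with more than one element satisfying a·b·c = 0 for all a, b, c ∈ S (that is, S is 3-nilpotent). Then S is subdirectly irreducible if and only if S is isomorphic, as an additively idempotent semiring, to the graph semiring S_G of some graph G. -/
universe u

-- The underlying set of the graph semiring of a graph with vertex set `V`: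
-- the vertices together with two extra elements `0` and `ω`.
inductive GS (V : Type u) : Type u where
  | zero : GS V
  | omega : GS V
  | vert : V → GS V

-- Multiplication of the graph semiring: `x·y = ω` if `x, y` are vertices joined by an
-- edge, and `x·y = 0` otherwise.
open Classical in
noncomputable def gsMul {V : Type u} (E : V → V → Prop) : GS V → GS V → GS V
  | GS.vert a, GS.vert b => if E a b then GS.omega else GS.zero
  | _, _ => GS.zero

-- The flat addition of the graph semiring: `a + b = a` if `a = b`, else `0`.
open Classical in
noncomputable def gsAdd {V : Type u} (a b : GS V) : GS V :=
  if a = b then a else GS.zero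

-- `gsSum f n = f 0 + f 1 + ⋯ + f n` (a sum of `n + 1` terms).
noncomputable def gsSum {V : Type u} (f : ℕ → GS V) : ℕ → GS V
  | 0 => f 0
  | n + 1 => gsAdd (gsSum f n) (f (n + 1))

-- `E` is a graph (in the sense of the paper): a directed graph with no isolated
-- vertices in which every vertex has out-degree at most 1 and in-degree at most 1.
def IsGraph {V : Type u} (E : V → V → Prop) : Prop :=
  (∀ v : V, ∃ u : V, E v u ∨ E u v) ∧
  (∀ v a b : V, E v a → E v b → a = b) ∧
  (∀ v a b : V, E a v → E b v → a = b)

-- `v 0, v 1, …, v (m - 1)` is a path of the graph `E` with `m` vertices.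
def IsPathOn {V : Type u} (E : V → V → Prop) (m : ℕ) (v : ℕ → V) : Prop :=
  (∀ i < m, ∀ j < m, v i = v j → i = j) ∧
  (∀ i : ℕ, i + 1 < m → E (v i) (v (i + 1)))

-- `v 0, v 1, …, v (m - 1)` is a cycle of the graph `E` of length `m`.
def IsCycleOn {V : Type u} (E : V → V → Prop) (m : ℕ) (v : ℕ → V) : Prop :=
  1 ≤ m ∧
  (∀ i < m, ∀ j < m, v i = v j → i = j) ∧
  (∀ i : ℕ, i + 1 < m → E (v i) (v (i + 1))) ∧
  E (v (m - 1)) (v 0)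

/-!
In a 3-nilpotent flat semiring every nonzero product is an annihilator. If `S` is subdirectly
irreducible, its monolith collapses a single nonzero element `ω` with `0`, and `ω` lies in every
nonzero ideal (the monolith is contained in the Rees congruence of that ideal). Applied to the
ideals `{0, p}` this makes `ω` the only nonzero annihilator, hence the value of every nonzero
product; applied to the ideal generated by `x ∉ {0, ω}` it gives a `y` with `x·y = ω` or
`y·x = ω`. So `S ∖ {0, ω}`, with an edge `x → y` iff `x·y ≠ 0`, is a graph without isolated
vertices, and 0-cancellativity bounds its degrees. Conversely, in a graph semiring every vertex
has a neighbour, so a congruence identifying some nonzero element with `0` also identifies `ω`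
with `0`: the congruence collapsing just `{0, ω}` is the monolith.
-/

section Congruences

variable {S : Type u} {mul : S → S → S} {zero : S}

theorem fAdd_of_ne {a b : S} (h : a ≠ b) : fAdd zero a b = zero := if_neg h

theorem fAdd_mem {C : S → Prop} (h0 : C zero) {a b : S} (h : C a ∨ C b) :
    C (fAdd zero a b) := by
  unfold fAdd
  split_ifs with hab
  · exact h.elim id (hab ▸ ·)
  · exact h0

def IsIdeal (mul : S → S → S) (zero : S) (C : S → Prop) : Prop :=
  C zero ∧ ∀ a s, C a → C (mul a s) ∧ C (mul s a)

def reesRel (C : S → Prop) (a b : S) : Prop :=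
  a = b ∨ (C a ∧ C b)

theorem IsIdeal.isCongr_reesRel {C : S → Prop} (hC : IsIdeal mul zero C) :
    IsCongr mul zero (reesRel C) := by
  refine ⟨⟨fun a => Or.inl rfl, ?_, ?_⟩, ?_, ?_⟩
  · rintro a b (rfl | ⟨ha, hb⟩)
    exacts [Or.inl rfl, Or.inr ⟨hb, ha⟩]
  · rintro a b c (rfl | ⟨ha, hb⟩) hbc
    · exact hbc
    · rcases hbc with rfl | ⟨-, hc⟩
      exacts [Or.inr ⟨ha, hb⟩, Or.inr ⟨ha, hc⟩]
  · rintro a b c d (rfl | ⟨ha, hb⟩) (rfl | ⟨hc, hd⟩)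
    · exact Or.inl rfl
    · exact Or.inr ⟨fAdd_mem hC.1 (Or.inr hc), fAdd_mem hC.1 (Or.inr hd)⟩
    all_goals exact Or.inr ⟨fAdd_mem hC.1 (Or.inl ha), fAdd_mem hC.1 (Or.inl hb)⟩
  · rintro a b c d (rfl | ⟨ha, hb⟩) (rfl | ⟨hc, hd⟩)
    · exact Or.inl rfl
    · exact Or.inr ⟨(hC.2 _ _ hc).2, (hC.2 _ _ hd).2⟩
    all_goals exact Or.inr ⟨(hC.2 _ _ ha).1, (hC.2 _ _ hb).1⟩

theorem ne_eq_of_rel_zero {r : S → S → Prop} {x : S} (hx : x ≠ zero) (hr : r x zero) :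
    r ≠ fun a b => a = b :=
  fun h => by subst h; exact hx hr

theorem IsCongr.rel_zero {r : S → S → Prop} (hr : IsCongr mul zero r) {x y : S}
    (hxy : r x y) (hne : x ≠ y) : r x zero := by
  simpa only [fAdd, if_pos, if_neg hne] using hr.2.1 x x x y (hr.1.refl x) hxy

theorem IsCongr.exists_ne_zero_rel_zero {r : S → S → Prop} (hr : IsCongr mul zero r)
    (hne : r ≠ fun a b => a = b) : ∃ x, x ≠ zero ∧ r x zero := by
  obtain ⟨x, y, hxy, hne⟩ : ∃ x y, r x y ∧ x ≠ y := by
    by_contra! h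
    exact hne (funext fun a => funext fun b =>
      propext ⟨h a b, fun hab => hab ▸ hr.1.refl a⟩)
  by_cases hx : x = zero
  · subst hx
    exact ⟨y, hne.symm, hr.rel_zero (hr.1.symm hxy) hne.symm⟩
  · exact ⟨x, hx, hr.rel_zero hxy hne⟩

end Congruences

section Ideals

variable {S : Type u} {mul : S → S → S} {zero : S}

theorem isIdeal_eq_zero_or_eq (hzero : ∀ a, mul zero a = zero ∧ mul a zero = zero) {p : S}
    (hp : ∀ s, mul p s = zero ∧ mul s p = zero) :
    IsIdeal mul zero (fun y => y = zero ∨ y = p) := by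
  refine ⟨Or.inl rfl, ?_⟩
  rintro a s (rfl | rfl)
  exacts [⟨Or.inl (hzero s).1, Or.inl (hzero s).2⟩, ⟨Or.inl (hp s).1, Or.inl (hp s).2⟩]

theorem isIdeal_memS1aS1 (hassoc : ∀ a b c, mul (mul a b) c = mul a (mul b c))
    (hzero : ∀ a, mul zero a = zero ∧ mul a zero = zero) (x : S) :
    IsIdeal mul zero (fun y => y = zero ∨ memS1aS1 mul x y) := by
  refine ⟨Or.inl rfl, ?_⟩
  rintro a s (rfl | rfl | ⟨t, rfl⟩ | ⟨t, rfl⟩ | ⟨t, v, rfl⟩)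
  · exact ⟨Or.inl (hzero s).1, Or.inl (hzero s).2⟩
  · exact ⟨Or.inr (Or.inr (Or.inl ⟨s, rfl⟩)),
      Or.inr (Or.inr (Or.inr (Or.inl ⟨s, rfl⟩)))⟩
  · exact ⟨Or.inr (Or.inr (Or.inl ⟨mul t s, hassoc _ _ _⟩)),
      Or.inr (Or.inr (Or.inr (Or.inr ⟨s, t, (hassoc _ _ _).symm⟩)))⟩
  · exact ⟨Or.inr (Or.inr (Or.inr (Or.inr ⟨t, s, rfl⟩))),
      Or.inr (Or.inr (Or.inr (Or.inl ⟨mul s t, (hassoc _ _ _).symm⟩)))⟩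
  · exact ⟨Or.inr (Or.inr (Or.inr (Or.inr ⟨t, mul v s, hassoc _ _ _⟩))),
      Or.inr (Or.inr (Or.inr (Or.inr ⟨mul s t, v, by simp only [hassoc]⟩)))⟩

end Ideals

section Heart

variable {S : Type u} {mul : S → S → S} {zero : S}

def IsHeart (mul : S → S → S) (zero w : S) : Prop :=
  w ≠ zero ∧ ∀ C, IsIdeal mul zero C → (∃ x, x ≠ zero ∧ C x) → C w

theorem SubdirectlyIrred.exists_isHeart (h : SubdirectlyIrred mul zero) :
    ∃ w, IsHeart mul zero w := by
  obtain ⟨m, ⟨hm, hmne⟩, hmin⟩ := h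
  obtain ⟨w, hw0, hmw⟩ := hm.exists_ne_zero_rel_zero hmne
  refine ⟨w, hw0, fun C hC ⟨x, hx0, hx⟩ => ?_⟩
  have hne : reesRel C ≠ fun a b => a = b := ne_eq_of_rel_zero hx0 (Or.inr ⟨hx, hC.1⟩)
  exact ((hmin _ hC.isCongr_reesRel hne w zero hmw).resolve_left hw0).1

theorem IsHeart.eq_of_isAnnihilator {w p : S} (hw : IsHeart mul zero w)
    (hzero : ∀ a, mul zero a = zero ∧ mul a zero = zero) (hp : IsAnnihilator mul zero p) :
    p = w :=
  ((hw.2 _ (isIdeal_eq_zero_or_eq hzero hp.2) ⟨p, hp.1, Or.inr rfl⟩).resolve_left hw.1).symm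

theorem IsHeart.memS1aS1 {w x : S} (hw : IsHeart mul zero w)
    (hassoc : ∀ a b c, mul (mul a b) c = mul a (mul b c))
    (hzero : ∀ a, mul zero a = zero ∧ mul a zero = zero) (hx : x ≠ zero) :
    memS1aS1 mul x w :=
  (hw.2 _ (isIdeal_memS1aS1 hassoc hzero x) ⟨x, hx, Or.inr (Or.inl rfl)⟩).resolve_left hw.1

end Heart

section Nilpotent

variable {S : Type u} {mul : S → S → S} {zero w : S}

theorem IsHeart.mul_eq (hflat : IsFlat mul zero) (h3nil : ∀ a b c, mul (mul a b) c = zero)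
    (hw : IsHeart mul zero w) {a b : S} (hab : mul a b ≠ zero) : mul a b = w :=
  hw.eq_of_isAnnihilator hflat.2.1
    ⟨hab, fun s => ⟨h3nil a b s, hflat.1 s a b ▸ h3nil s a b⟩⟩

theorem IsHeart.isAnnihilator (hflat : IsFlat mul zero)
    (h3nil : ∀ a b c, mul (mul a b) c = zero) (hw : IsHeart mul zero w) :
    IsAnnihilator mul zero w := by
  refine ⟨hw.1, fun s => ⟨?_, ?_⟩⟩
  · by_contra h
    have hws := hw.mul_eq hflat h3nil h
    exact h (by simpa only [hws] using h3nil w s s)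
  · by_contra h
    have hsw := hw.mul_eq hflat h3nil h
    exact h (by simpa only [hsw, hflat.1] using h3nil s s w)

theorem IsHeart.exists_mul_eq (hflat : IsFlat mul zero)
    (h3nil : ∀ a b c, mul (mul a b) c = zero) (hw : IsHeart mul zero w) {x : S}
    (hx0 : x ≠ zero) (hxw : x ≠ w) : (∃ s, mul x s = w) ∨ ∃ s, mul s x = w := by
  rcases hw.memS1aS1 hflat.1 hflat.2.1 hx0 with h | ⟨s, h⟩ | ⟨s, h⟩ | ⟨s, t, h⟩
  · exact absurd h.symm hxw
  · exact Or.inl ⟨s, h.symm⟩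
  · exact Or.inr ⟨s, h.symm⟩
  · exact absurd (h.trans (h3nil s x t)) hw.1

end Nilpotent

section HeartGraph

variable {S : Type u} {mul : S → S → S} {zero w : S}

abbrev HeartVertex (zero w : S) : Type u := {x : S // x ≠ zero ∧ x ≠ w}

def heartGraph (mul : S → S → S) (zero w : S) (p q : HeartVertex zero w) : Prop :=
  mul p.1 q.1 ≠ zero

def heartEval (zero w : S) : GS (HeartVertex zero w) → S
  | .zero => zero
  | .omega => w
  | .vert v => v.1

theorem isGraph_heartGraph (hflat : IsFlat mul zero)
    (h3nil : ∀ a b c, mul (mul a b) c = zero) (hw : IsHeart mul zero w) :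
    IsGraph (heartGraph mul zero w) := by
  have hann := hw.isAnnihilator hflat h3nil
  refine ⟨fun ⟨x, hx0, hxw⟩ => ?_, fun v a b ha hb => ?_, fun v a b ha hb => ?_⟩
  · rcases hw.exists_mul_eq hflat h3nil hx0 hxw with ⟨s, hs⟩ | ⟨s, hs⟩
    · have hs0 : s ≠ zero := by rintro rfl; exact hw.1 (hs ▸ (hflat.2.1 x).2)
      have hsw : s ≠ w := by rintro rfl; exact hw.1 (hs ▸ (hann.2 x).2)
      exact ⟨⟨s, hs0, hsw⟩, Or.inl (hs ▸ hw.1)⟩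
    · have hs0 : s ≠ zero := by rintro rfl; exact hw.1 (hs ▸ (hflat.2.1 x).1)
      have hsw : s ≠ w := by rintro rfl; exact hw.1 (hs ▸ (hann.2 x).1)
      exact ⟨⟨s, hs0, hsw⟩, Or.inr (hs ▸ hw.1)⟩
  · exact Subtype.ext <| hflat.2.2.1 _ _ _
      ((hw.mul_eq hflat h3nil ha).trans (hw.mul_eq hflat h3nil hb).symm) ha
  · exact Subtype.ext <| hflat.2.2.2 _ _ _
      ((hw.mul_eq hflat h3nil ha).trans (hw.mul_eq hflat h3nil hb).symm) ha

theorem heartEval_bijective (hw0 : w ≠ zero) : Function.Bijective (heartEval zero w) := by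
  refine ⟨?_, fun x => ?_⟩
  · rintro (_ | _ | ⟨x, hx0, hxw⟩) (_ | _ | ⟨y, hy0, hyw⟩) h <;>
      simp only [heartEval] at h <;>
      first | rfl | (subst h; first | rfl | contradiction)
  · by_cases hx0 : x = zero
    · exact ⟨.zero, hx0.symm⟩
    by_cases hxw : x = w
    · exact ⟨.omega, hxw.symm⟩
    exact ⟨.vert ⟨x, hx0, hxw⟩, rfl⟩

theorem heartEval_gsMul (hflat : IsFlat mul zero) (h3nil : ∀ a b c, mul (mul a b) c = zero)
    (hw : IsHeart mul zero w) (x y : GS (HeartVertex zero w)) :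
    heartEval zero w (gsMul (heartGraph mul zero w) x y) =
      mul (heartEval zero w x) (heartEval zero w y) := by
  have hann := hw.isAnnihilator hflat h3nil
  rcases x with _ | _ | ⟨a⟩ <;> rcases y with _ | _ | ⟨b⟩
  case vert.vert =>
    by_cases hab : heartGraph mul zero w a b
    · simp only [gsMul, if_pos hab, heartEval]
      exact (hw.mul_eq hflat h3nil hab).symm
    · simp only [gsMul, if_neg hab, heartEval]
      exact (not_not.1 hab).symm
  all_goals simp only [gsMul, heartEval, (hflat.2.1 _).1, (hflat.2.1 _).2, (hann.2 _).1,
    (hann.2 _).2]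

end HeartGraph

section GraphSemiring

variable {S : Type u} {mul : S → S → S} {zero : S} {V : Type u} {E : V → V → Prop}

theorem map_fAdd {φ : S → GS V} (hφ : Function.Injective φ) (h0 : φ zero = GS.zero)
    (a b : S) : φ (fAdd zero a b) = gsAdd (φ a) (φ b) := by
  by_cases hab : a = b
  · subst hab
    simp [fAdd, gsAdd]
  · rw [fAdd_of_ne hab, h0, gsAdd, if_neg (hφ.ne hab)]

theorem IsGraph.exists_gsMul_eq_omega (hE : IsGraph E) (v : V) :
    ∃ y, gsMul E (.vert v) y = .omega ∨ gsMul E y (.vert v) = .omega := by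
  obtain ⟨u, hu⟩ := hE.1 v
  exact ⟨.vert u, hu.imp (if_pos ·) (if_pos ·)⟩

theorem SubdirectlyIrred.exists_graph_iso (hflat : IsFlat mul zero)
    (h3nil : ∀ a b c, mul (mul a b) c = zero) (h : SubdirectlyIrred mul zero) :
    ∃ (V : Type u) (E : V → V → Prop), IsGraph E ∧
      ∃ φ : S → GS V, Function.Bijective φ ∧
        (∀ a b : S, φ (fAdd zero a b) = gsAdd (φ a) (φ b)) ∧
        (∀ a b : S, φ (mul a b) = gsMul E (φ a) (φ b)) := by
  obtain ⟨w, hw⟩ := h.exists_isHeart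
  let e := Equiv.ofBijective _ (heartEval_bijective hw.1)
  refine ⟨_, _, isGraph_heartGraph hflat h3nil hw, e.symm, e.symm.bijective,
    map_fAdd e.symm.injective (e.symm_apply_eq.2 rfl), fun a b => e.injective ?_⟩
  simp only [e, Equiv.ofBijective_apply, Equiv.ofBijective_apply_symm_apply,
    heartEval_gsMul hflat h3nil hw]

theorem subdirectlyIrred_of_annihilator_rel_zero
    (hzero : ∀ a, mul zero a = zero ∧ mul a zero = zero) {w : S}
    (hw : IsAnnihilator mul zero w)
    (hrel : ∀ r, IsCongr mul zero r → (r ≠ fun a b => a = b) → r w zero) :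
    SubdirectlyIrred mul zero := by
  have hC := isIdeal_eq_zero_or_eq hzero hw.2
  refine ⟨reesRel _,
    ⟨hC.isCongr_reesRel, ne_eq_of_rel_zero hw.1 (Or.inr ⟨Or.inr rfl, hC.1⟩)⟩,
    fun r hr hne a b hab => ?_⟩
  have hrw := hrel r hr hne
  rcases hab with rfl | ⟨rfl | rfl, rfl | rfl⟩
  exacts [hr.1.refl a, hr.1.refl _, hr.1.symm hrw, hrw, hr.1.refl _]

theorem subdirectlyIrred_of_graph_iso (hE : IsGraph E) {φ : S → GS V}
    (hφ : Function.Bijective φ) (hadd : ∀ a b, φ (fAdd zero a b) = gsAdd (φ a) (φ b))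
    (hmul : ∀ a b, φ (mul a b) = gsMul E (φ a) (φ b)) : SubdirectlyIrred mul zero := by
  obtain ⟨o, ho⟩ := hφ.2 .zero
  obtain ⟨w, hw⟩ := hφ.2 .omega
  have h0 : φ zero = .zero := by
    have hne : o ≠ w := fun h => by simp [h, hw] at ho
    calc φ zero = φ (fAdd zero o w) := by rw [fAdd_of_ne hne]
      _ = .zero := by rw [hadd, ho, hw, gsAdd, if_neg nofun]
  have hzero : ∀ a, mul zero a = zero ∧ mul a zero = zero := fun a =>
    ⟨hφ.1 (by rw [hmul, h0]; rfl), hφ.1 (by rw [hmul, h0]; cases φ a <;> rfl)⟩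
  have hann : IsAnnihilator mul zero w :=
    ⟨fun h => by simp [h, h0] at hw, fun s =>
      ⟨hφ.1 (by rw [hmul, hw, h0]; rfl), hφ.1 (by rw [hmul, hw, h0]; cases φ s <;> rfl)⟩⟩
  refine subdirectlyIrred_of_annihilator_rel_zero hzero hann fun r hr hne => ?_
  obtain ⟨x, hx0, hrx⟩ := hr.exists_ne_zero_rel_zero hne
  cases hx : φ x with
  | zero => exact absurd (hφ.1 (hx.trans h0.symm)) hx0
  | omega => exact hφ.1 (hx.trans hw.symm) ▸ hrx
  | vert v =>
    obtain ⟨g, hg⟩ := hE.exists_gsMul_eq_omega v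
    obtain ⟨y, rfl⟩ := hφ.2 g
    rcases hg with hg | hg
    · have hxy : mul x y = w := hφ.1 (by rw [hmul, hx, hg, hw])
      simpa only [hxy, (hzero y).1] using hr.2.2 _ _ _ _ hrx (hr.1.refl y)
    · have hyx : mul y x = w := hφ.1 (by rw [hmul, hx, hg, hw])
      simpa only [hyx, (hzero y).2] using hr.2.2 _ _ _ _ (hr.1.refl y) hrx

end GraphSemiring

theorem stmt_7_general {S : Type u} (mul : S → S → S) (zero : S)
    (hflat : IsFlat mul zero) (h3nil : ∀ a b c : S, mul (mul a b) c = zero) :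
    SubdirectlyIrred mul zero ↔
      ∃ (V : Type u) (E : V → V → Prop), IsGraph E ∧
        ∃ φ : S → GS V, Function.Bijective φ ∧
          (∀ a b : S, φ (fAdd zero a b) = gsAdd (φ a) (φ b)) ∧
          (∀ a b : S, φ (mul a b) = gsMul E (φ a) (φ b)) :=
  ⟨SubdirectlyIrred.exists_graph_iso hflat h3nil,
    fun ⟨_, _, hE, _, hφ, hadd, hmul⟩ => subdirectlyIrred_of_graph_iso hE hφ hadd hmul⟩

/-- A flat semiring with more than one element satisfying `a·b·c = 0`
(i.e. `3`-nilpotent) is subdirectly irreducible iff it is isomorphic, as an additively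
idempotent semiring, to the graph semiring of some graph. -/
theorem stmt_7 {S : Type u} (mul : S → S → S) (zero : S)
    (hflat : IsFlat mul zero) (h3nil : ∀ a b c : S, mul (mul a b) c = zero)
    (hnontriv : ∃ a b : S, a ≠ b) :
    SubdirectlyIrred mul zero ↔
      ∃ (V : Type u) (E : V → V → Prop), IsGraph E ∧
        ∃ φ : S → GS V, Function.Bijective φ ∧
          (∀ a b : S, φ (fAdd zero a b) = gsAdd (φ a) (φ b)) ∧
          (∀ a b : S, φ (mul a b) = gsMul E (φ a) (φ b)) :=
  stmt_7_general mul zero hflat h3nil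
end

section
/- Let m, n ≥ 2 be integers. The graph semiring of the disjoint union of m paths with n vertices each (the {0, ω}-direct union of m copies of S_{p_n}) is a homomorphic image of a subsemiring of the m-th direct power T^m, where T is the graph semiring of the disjoint union of two paths with n vertices each (S_{p_n} ∘ S_{p_n}). -/
universe u v

-- `B` (with operations `addB`, `mulB`) is a homomorphic image of a subsemiring of `A`
-- (with operations `addA`, `mulA`): there is a subset of `A` closed under both
-- operations and a surjection from it onto `B` preserving both operations.
def IsHomImageOfSub {A : Type u} {B : Type v}
    (addA mulA : A → A → A) (addB mulB : B → B → B) : Prop :=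
  ∃ (T : Set A) (φ : A → B),
    (∀ x ∈ T, ∀ y ∈ T, addA x y ∈ T ∧ mulA x y ∈ T) ∧
    (∀ b : B, ∃ x ∈ T, φ x = b) ∧
    (∀ x ∈ T, ∀ y ∈ T,
      φ (addA x y) = addB (φ x) (φ y) ∧ φ (mulA x y) = mulB (φ x) (φ y))

-- The edge relation of the disjoint union of `k` paths with `n` vertices each,
-- the copies being indexed by `ι`.
def unionPathsE (ι : Type) (n : ℕ) : ι × Fin n → ι × Fin n → Prop :=
  fun p q => p.1 = q.1 ∧ (q.2 : ℕ) = (p.2 : ℕ) + 1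

/-! Send vertex `(k, j)` of the union of `m` paths to the tuple whose `i`-th coordinate is
vertex `j` of the path `true` of `T` if `i = k`, and of the path `false` otherwise. Two such
tuples multiply to the constant tuple `ω` exactly when their path labels agree and their
positions are consecutive, and to a tuple with a zero coordinate otherwise. The tuples with a
zero coordinate form an ideal of `T^m`; adding the images of the vertices and the constant
tuple `ω` gives a subsemiring, which maps onto the target by collapsing that ideal to `0`. -/

section GraphSemiring

variable {V : Type u} (E : V → V → Prop)

@[simp] lemma gsMul_zero_left (y : GS V) : gsMul E GS.zero y = GS.zero := by cases y <;> rfl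

@[simp] lemma gsMul_zero_right (x : GS V) : gsMul E x GS.zero = GS.zero := by cases x <;> rfl

@[simp] lemma gsMul_omega_left (y : GS V) : gsMul E GS.omega y = GS.zero := by cases y <;> rfl

@[simp] lemma gsMul_omega_right (x : GS V) : gsMul E x GS.omega = GS.zero := by cases x <;> rfl

open Classical in
lemma gsMul_vert (a b : V) :
    gsMul E (GS.vert a) (GS.vert b) = if E a b then GS.omega else GS.zero := rfl

@[simp] lemma gsAdd_zero_left (x : GS V) : gsAdd GS.zero x = GS.zero := by
  unfold gsAdd; split <;> rfl

@[simp] lemma gsAdd_zero_right (x : GS V) : gsAdd x GS.zero = GS.zero := by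
  unfold gsAdd; split <;> simp_all

@[simp] lemma gsAdd_self (x : GS V) : gsAdd x x = x := by simp [gsAdd]

lemma gsAdd_of_ne {x y : GS V} (h : x ≠ y) : gsAdd x y = GS.zero := by simp [gsAdd, h]

end GraphSemiring

namespace GS

variable {V : Type u} {W : Type v} {ι : Type*} (e : V → ι → W)

def embed : GS V → ι → GS W
  | zero => fun _ => zero
  | omega => fun _ => omega
  | vert a => fun i => vert (e a i)

lemma exists_embed_eq_zero_iff [Nonempty ι] {x : GS V} :
    (∃ i, embed e x i = zero) ↔ x = zero := by
  cases x <;> simp [embed]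

lemma embed_injective [Nonempty ι] (he : Function.Injective e) :
    Function.Injective (embed e) := by
  obtain ⟨i⟩ := ‹Nonempty ι›
  rintro (_ | _ | a) (_ | _ | b) h <;> have hi := congrFun h i <;> simp_all [embed]
  exact he (funext fun i => by simpa using congrFun h i)

def Represents (f : ι → GS W) (x : GS V) : Prop :=
  f = embed e x ∨ (∃ i, f i = zero) ∧ x = zero

variable {e}

lemma Represents.unique [Nonempty ι] (he : Function.Injective e) {f : ι → GS W} {x y : GS V}
    (hx : Represents e f x) (hy : Represents e f y) : x = y := by
  rcases hx with rfl | ⟨hf, rfl⟩ <;> rcases hy with h | ⟨hf', rfl⟩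
  · exact embed_injective e he h
  · exact (exists_embed_eq_zero_iff e).1 hf'
  · exact ((exists_embed_eq_zero_iff e).1 (h ▸ hf)).symm
  · rfl

lemma Represents.add [Nonempty ι] (he : Function.Injective e) {f g : ι → GS W} {x y : GS V}
    (hf : Represents e f x) (hg : Represents e g y) :
    Represents e (fun i => gsAdd (f i) (g i)) (gsAdd x y) := by
  rcases hf with rfl | ⟨⟨i, hi⟩, rfl⟩
  · rcases hg with rfl | ⟨⟨i, hi⟩, rfl⟩
    · by_cases hxy : x = y
      · subst hxy
        exact Or.inl (funext fun i => by simp)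
      · obtain ⟨i, hi⟩ := Function.ne_iff.1 ((embed_injective e he).ne hxy)
        exact Or.inr ⟨⟨i, gsAdd_of_ne hi⟩, gsAdd_of_ne hxy⟩
    · exact Or.inr ⟨⟨i, by simp [hi]⟩, by simp⟩
  · exact Or.inr ⟨⟨i, by simp [hi]⟩, by simp⟩

lemma represents_embed_mul_embed (E : V → V → Prop) (F : W → W → Prop)
    (hE : ∀ a b, E a b ↔ ∀ i, F (e a i) (e b i)) (x y : GS V) :
    Represents e (fun i => gsMul F (embed e x i) (embed e y i)) (gsMul E x y) := by
  classical
  cases x with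
  | vert a =>
    cases y with
    | vert b =>
      by_cases hab : E a b
      · refine Or.inl (funext fun i => ?_)
        simp [embed, gsMul_vert, hab, (hE a b).1 hab i]
      · obtain ⟨i, hi⟩ := not_forall.1 (mt (hE a b).2 hab)
        exact Or.inr ⟨⟨i, by simp [embed, gsMul_vert, hi]⟩, by simp [gsMul_vert, hab]⟩
    | _ => exact Or.inl (funext fun i => by simp [embed])
  | _ => exact Or.inl (funext fun i => by simp [embed])

lemma Represents.mul (E : V → V → Prop) (F : W → W → Prop)
    (hE : ∀ a b, E a b ↔ ∀ i, F (e a i) (e b i)) {f g : ι → GS W} {x y : GS V}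
    (hf : Represents e f x) (hg : Represents e g y) :
    Represents e (fun i => gsMul F (f i) (g i)) (gsMul E x y) := by
  rcases hf with rfl | ⟨⟨i, hi⟩, rfl⟩
  · rcases hg with rfl | ⟨⟨i, hi⟩, rfl⟩
    · exact represents_embed_mul_embed E F hE x y
    · exact Or.inr ⟨⟨i, by simp [hi]⟩, by simp⟩
  · exact Or.inr ⟨⟨i, by simp [hi]⟩, by simp⟩

end GS

open GS in
theorem isHomImageOfSub_of_embedding {V : Type u} {W : Type v} {ι : Type*} [Nonempty ι]
    (E : V → V → Prop) (F : W → W → Prop) (e : V → ι → W) (he : Function.Injective e)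
    (hE : ∀ a b, E a b ↔ ∀ i, F (e a i) (e b i)) :
    IsHomImageOfSub
      (fun f g : ι → GS W => fun i => gsAdd (f i) (g i))
      (fun f g : ι → GS W => fun i => gsMul F (f i) (g i))
      (gsAdd : GS V → GS V → GS V) (gsMul E) := by
  classical
  let φ (f : ι → GS W) : GS V := if h : ∃ x, Represents e f x then h.choose else zero
  have hφ {f x} (hfx : Represents e f x) : φ f = x := by
    have h : ∃ x, Represents e f x := ⟨x, hfx⟩
    simpa [φ, h] using h.choose_spec.unique he hfx
  refine ⟨{f | ∃ x, Represents e f x}, φ, ?_, fun x => ⟨embed e x, ⟨x, .inl rfl⟩, hφ (.inl rfl)⟩, ?_⟩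
  · rintro f ⟨x, hx⟩ g ⟨y, hy⟩
    exact ⟨⟨_, hx.add he hy⟩, ⟨_, hx.mul E F hE hy⟩⟩
  · rintro f ⟨x, hx⟩ g ⟨y, hy⟩
    rw [hφ (hx.add he hy), hφ (hx.mul E F hE hy), hφ hx, hφ hy]
    exact ⟨rfl, rfl⟩

theorem stmt_17_general (m n : ℕ) (hm : 2 ≤ m) :
    IsHomImageOfSub
      (fun f g : Fin m → GS (Bool × Fin n) => fun i => gsAdd (f i) (g i))
      (fun f g : Fin m → GS (Bool × Fin n) =>
        fun i => gsMul (unionPathsE Bool n) (f i) (g i))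
      (gsAdd : GS (Fin m × Fin n) → GS (Fin m × Fin n) → GS (Fin m × Fin n))
      (gsMul (unionPathsE (Fin m) n)) := by
  have : Nonempty (Fin m) := ⟨⟨0, by omega⟩⟩
  refine isHomImageOfSub_of_embedding _ _ (fun p i => (decide (i = p.1), p.2)) ?_ ?_
  · rintro ⟨k, j⟩ ⟨k', j'⟩ h
    simpa using congrFun h k
  · rintro ⟨k, j⟩ ⟨k', j'⟩
    simp only [unionPathsE, decide_eq_decide, forall_and, forall_const]
    exact and_congr_left' ⟨fun h i => h ▸ Iff.rfl, fun h => (h k).1 rfl⟩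

/-- For `m, n ≥ 2`, the graph semiring of the disjoint union of `m` paths
with `n` vertices each (the `{0, ω}`-direct union of `m` copies of `S_{p_n}`) is a
homomorphic image of a subsemiring of `T^m`, where `T = S_{p_n} ∘ S_{p_n}` is the graph
semiring of the disjoint union of two paths with `n` vertices each. -/
theorem stmt_17 (m n : ℕ) (hm : 2 ≤ m) (hn : 2 ≤ n) :
    IsHomImageOfSub
      (fun f g : Fin m → GS (Bool × Fin n) => fun i => gsAdd (f i) (g i))
      (fun f g : Fin m → GS (Bool × Fin n) =>
        fun i => gsMul (unionPathsE Bool n) (f i) (g i))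
      (gsAdd : GS (Fin m × Fin n) → GS (Fin m × Fin n) → GS (Fin m × Fin n))
      (gsMul (unionPathsE (Fin m) n)) :=
  stmt_17_general m n hm
end
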